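/- Additivity of KD mana: M(ρ⊗σ) = M(ρ) + M(σ) for density matrices ρ and σ on (C^2)^{⊗n₁} and (C^2)^{⊗n₂}, where M(ρ) = log Σ_{g,χ}|Q_{g,χ}(ρ)|. -/

import Mathlib

open scoped BigOperators
open Matrix Kronecker
open scoped ComplexOrder

noncomputable section

/-- The group `G = (ℤ/2ℤ)^n` indexing the computational basis of `(ℂ²)^{⊗n}`. -/
abbrev G (n : ℕ) : Type := Fin n → ZMod 2

/-- Mod-2 dot product. -/
def dot {n : ℕ} (u v : G n) : ZMod 2 := ∑ j, u j * v j

/-- `(-1)^x` for `x : ZMod 2`. -/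
def sgn (x : ZMod 2) : ℂ := if x = 0 then 1 else -1

/-- Normalization constant `2^{-n/2}`. -/
def nrm (n : ℕ) : ℂ := ((Real.sqrt 2 ^ n : ℝ) : ℂ)⁻¹

/-- Amplitude `⟨a|χ⟩ = (-1)^{χ·a} 2^{-n/2}` of the Fourier basis state `|χ⟩`. -/
def chi {n : ℕ} (χ a : G n) : ℂ := sgn (dot χ a) * nrm n

/-- KD phase-space point operator `B_{g,χ} = |χ⟩⟨χ|g⟩⟨g|`. -/
def B {n : ℕ} (g χ : G n) : Matrix (G n) (G n) ℂ :=
  Matrix.of fun a b => chi χ a * (starRingEnd ℂ) (chi χ g) * (if b = g then 1 else 0)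

/-- Real Pauli string `P_{u,v} = ∏_j Z_j^{v_j} X_j^{u_j}`:
it maps `|b⟩` to `(-1)^{v·(b+u)} |b+u⟩`. -/
def P {n : ℕ} (u v : G n) : Matrix (G n) (G n) ℂ :=
  Matrix.of fun a b => if a = b + u then sgn (dot v a) else 0

/-- The `(ℤ/2ℤ)^n` Kirkwood–Dirac distribution `Q_{g,χ}(ρ) = Tr(B_{g,χ} ρ)`. -/
def Q {n : ℕ} (ρ : Matrix (G n) (G n) ℂ) (g χ : G n) : ℂ := (B g χ * ρ).trace


open ComplexConjugate

/-
Since `Tr ((A ⊗ B)(C ⊗ D)) = Tr (AC) · Tr (BD)`, the KD distribution of `ρ ⊗ σ` is the product of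
those of `ρ` and `σ`, so its ℓ¹-norm factors and the logarithm turns the product into a sum. This
needs both ℓ¹-norms to be nonzero: summing `Q ρ g χ` over `χ` gives `ρ g g` by completeness of the
Fourier basis, so the ℓ¹-norm is at least `|Tr ρ| = 1`.
-/

lemma sgn_add (x y : ZMod 2) : sgn (x + y) = sgn x * sgn y := by
  have h : ∀ a b : ZMod 2, a + b = 0 ↔ (a = 0 ↔ b = 0) := by decide
  by_cases hx : x = 0 <;> by_cases hy : y = 0 <;> simp [sgn, h, hx, hy]

lemma conj_sgn (x : ZMod 2) : conj (sgn x) = sgn x := by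
  unfold sgn; split_ifs <;> simp

lemma sgn_sum {ι : Type*} (s : Finset ι) (f : ι → ZMod 2) :
    sgn (∑ j ∈ s, f j) = ∏ j ∈ s, sgn (f j) := by
  induction s using Finset.cons_induction with
  | empty => rfl
  | cons a s ha ih => rw [Finset.sum_cons, Finset.prod_cons, sgn_add, ih]

lemma sum_sgn_mul (w : ZMod 2) : ∑ c : ZMod 2, sgn (c * w) = if w = 0 then 2 else 0 := by
  rw [show (Finset.univ : Finset (ZMod 2)) = {0, 1} from rfl, Finset.sum_pair zero_ne_one]
  obtain rfl | rfl : w = 0 ∨ w = 1 := by revert w; decide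
  all_goals norm_num [sgn]

lemma sum_sgn_dot {n : ℕ} (w : G n) :
    ∑ χ : G n, sgn (dot χ w) = if w = 0 then (2 : ℂ) ^ n else 0 := by
  simp only [dot, sgn_sum]
  rw [← Fintype.prod_sum (fun j c => sgn (c * w j))]
  simp only [sum_sgn_mul]
  split_ifs with hw
  · simp [hw]
  · obtain ⟨j, hj⟩ := Function.ne_iff.mp hw
    exact Finset.prod_eq_zero (Finset.mem_univ j) (if_neg hj)

lemma two_pow_mul_nrm_mul_conj_nrm (n : ℕ) : (2 : ℂ) ^ n * (nrm n * conj (nrm n)) = 1 := by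
  have hsq : ((Real.sqrt 2 ^ n : ℝ) : ℂ) * ((Real.sqrt 2 ^ n : ℝ) : ℂ) = 2 ^ n := by
    rw [← Complex.ofReal_mul, ← mul_pow, Real.mul_self_sqrt zero_le_two]; push_cast; rfl
  have hconj : conj (nrm n) = nrm n := by simp [nrm]
  rw [hconj, nrm, ← mul_inv, hsq, mul_inv_cancel₀ (pow_ne_zero n two_ne_zero)]

lemma sum_chi_mul_conj_chi {n : ℕ} (a g : G n) :
    ∑ χ : G n, chi χ a * conj (chi χ g) = if a = g then 1 else 0 := by
  have hterm (χ : G n) :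
      chi χ a * conj (chi χ g) = sgn (dot χ (a + g)) * (nrm n * conj (nrm n)) := by
    have hdot : dot χ (a + g) = dot χ a + dot χ g := by
      simp only [dot, Pi.add_apply, mul_add, Finset.sum_add_distrib]
    rw [hdot, sgn_add]
    simp only [chi, map_mul, conj_sgn]
    ring
  have hag : a + g = 0 ↔ a = g := by rw [← ZModModule.sub_eq_add, sub_eq_zero]
  simp only [hterm, ← Finset.sum_mul, sum_sgn_dot, hag]
  split_ifs
  · exact two_pow_mul_nrm_mul_conj_nrm n
  · exact zero_mul _

lemma sum_Q_eq_trace {n : ℕ} (ρ : Matrix (G n) (G n) ℂ) : ∑ g, ∑ χ, Q ρ g χ = ρ.trace := by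
  have hQ (g χ : G n) : Q ρ g χ = ∑ a, chi χ a * conj (chi χ g) * ρ g a := by
    simp [Q, Matrix.trace, Matrix.mul_apply, B]
  calc ∑ g, ∑ χ, Q ρ g χ
      = ∑ g, ∑ a, (∑ χ, chi χ a * conj (chi χ g)) * ρ g a := by
        simp only [hQ, Finset.sum_mul]
        exact Finset.sum_congr rfl fun g _ => Finset.sum_comm
    _ = ρ.trace := by simp [sum_chi_mul_conj_chi, Matrix.trace]

lemma one_le_sum_norm_Q {n : ℕ} {ρ : Matrix (G n) (G n) ℂ} (hρ : ρ.trace = 1) :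
    1 ≤ ∑ g, ∑ χ, ‖Q ρ g χ‖ :=
  calc (1 : ℝ) = ‖∑ g, ∑ χ, Q ρ g χ‖ := by rw [sum_Q_eq_trace, hρ, norm_one]
    _ ≤ ∑ g, ‖∑ χ, Q ρ g χ‖ := norm_sum_le _ _
    _ ≤ ∑ g, ∑ χ, ‖Q ρ g χ‖ := Finset.sum_le_sum fun g _ => norm_sum_le _ _

lemma trace_kronecker_B_mul_kronecker {n₁ n₂ : ℕ} (g χ : G n₁) (g' χ' : G n₂)
    (ρ : Matrix (G n₁) (G n₁) ℂ) (σ : Matrix (G n₂) (G n₂) ℂ) :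
    ((B g χ ⊗ₖ B g' χ') * (ρ ⊗ₖ σ)).trace = Q ρ g χ * Q σ g' χ' := by
  rw [← Matrix.mul_kronecker_mul, Matrix.trace_kronecker]; rfl

/-- KD mana `M(rho) = log sum_{g,chi} |Q_{g,chi}(rho)|`. -/
def mana {n : ℕ} (ρ : Matrix (G n) (G n) ℂ) : ℝ :=
  Real.log (∑ g : G n, ∑ χ : G n, ‖Q ρ g χ‖)

theorem mana_additive_general {n₁ n₂ : ℕ}
    (ρ : Matrix (G n₁) (G n₁) ℂ) (σ : Matrix (G n₂) (G n₂) ℂ)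
    (hρτ : ρ.trace = 1)
    (hστ : σ.trace = 1) :
    Real.log (∑ g : G n₁, ∑ g' : G n₂, ∑ χ : G n₁, ∑ χ' : G n₂,
        ‖((B g χ ⊗ₖ B g' χ') * (ρ ⊗ₖ σ)).trace‖) =
      mana ρ + mana σ := by
  have hprod : (∑ g : G n₁, ∑ g' : G n₂, ∑ χ : G n₁, ∑ χ' : G n₂,
        ‖((B g χ ⊗ₖ B g' χ') * (ρ ⊗ₖ σ)).trace‖) =
      (∑ g : G n₁, ∑ χ : G n₁, ‖Q ρ g χ‖) * ∑ g' : G n₂, ∑ χ' : G n₂, ‖Q σ g' χ'‖ := by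
    simp only [trace_kronecker_B_mul_kronecker, norm_mul, Finset.sum_mul_sum]
  have hρ₀ := (one_le_sum_norm_Q hρτ).trans_lt' one_pos
  have hσ₀ := (one_le_sum_norm_Q hστ).trans_lt' one_pos
  rw [hprod, Real.log_mul hρ₀.ne' hσ₀.ne', mana, mana]

/-- additivity of the KD mana under tensor products. On the composite
system the KD phase-space point operators are Kronecker products. -/
theorem mana_additive {n₁ n₂ : ℕ}
    (ρ : Matrix (G n₁) (G n₁) ℂ) (σ : Matrix (G n₂) (G n₂) ℂ)
    (hρ : ρ.PosSemidef) (hρτ : ρ.trace = 1)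
    (hσ : σ.PosSemidef) (hστ : σ.trace = 1) :
    Real.log (∑ g : G n₁, ∑ g' : G n₂, ∑ χ : G n₁, ∑ χ' : G n₂,
        ‖((B g χ ⊗ₖ B g' χ') * (ρ ⊗ₖ σ)).trace‖) =
      mana ρ + mana σ :=
  mana_additive_general ρ σ hρτ hστ
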